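/- Uniqueness of Münchhausen predicates at finite levels: if T is a sound Λ-one-Münchhausen theory (Λ ≥ ω) with two Münchhausen provability predicates [α]_T and [α]'_T both satisfying the defining recursion, then for every (external) natural number n, T ⊢ ∀φ ([n]_T φ ↔ [n]'_T φ). The proof is by external induction on n, using necessitation to import the induction hypothesis under □_T. -/

import Mathlib

/-- An abstract arithmetical theory `T`: a type `S` of sentences, derivability
`Prov` (for `T ⊢ ·`), falsum and implication, a standard formalized
provability predicate `box` (for `□_T`), an internal representation `ltS` of
the ordering `≺` on (notations for) ordinals, and internal existential
quantifiers over formulas (`exF`), ordinal notations (`exO`), numbers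
(`exN`), and finite sequences of (ordinal, formula) pairs (`exL`). -/
structure MFrame : Type 2 where
  S : Type 1
  Prov : S → Prop
  bot : S
  imp : S → S → S
  box : S → S
  ltS : Ordinal.{0} → Ordinal.{0} → S
  exF : (S → S) → S
  exO : (Ordinal.{0} → S) → S
  exN : (ℕ → S) → S
  exL : (List (Ordinal.{0} × S) → S) → S

namespace MFrame

variable (F : MFrame)

def neg (a : F.S) : F.S := F.imp a F.bot
def top : F.S := F.neg F.bot
def and (a b : F.S) : F.S := F.neg (F.imp a (F.neg b))
def or (a b : F.S) : F.S := F.imp (F.neg a) b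
def iff (a b : F.S) : F.S := F.and (F.imp a b) (F.imp b a)

/-- `⟨ξ⟩_T a := ¬[ξ]_T ¬a` for a candidate Münchhausen predicate `M`. -/
def mdia (M : Ordinal.{0} → F.S → F.S) (ξ : Ordinal.{0}) (a : F.S) : F.S :=
  F.neg (M ξ (F.neg a))

/-- Basic conditions on the theory `T`: classical propositional logic via a
complete Hilbert basis with modus ponens, the Hilbert–Bernays derivability
conditions for `□_T`, introduction/elimination rules for the internal
existential quantifiers, and correctness of the internal ordering `≺`
(true facts `ξ ≺ ζ` are provable, false ones refutable, and `T` proves `≺`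
transitive). -/
structure Basic (F : MFrame) : Prop where
  mp : ∀ {a b : F.S}, F.Prov (F.imp a b) → F.Prov a → F.Prov b
  ax1 : ∀ a b : F.S, F.Prov (F.imp a (F.imp b a))
  ax2 : ∀ a b c : F.S,
    F.Prov (F.imp (F.imp a (F.imp b c)) (F.imp (F.imp a b) (F.imp a c)))
  ax3 : ∀ a b : F.S,
    F.Prov (F.imp (F.imp (F.neg a) (F.neg b)) (F.imp b a))
  nec : ∀ {a : F.S}, F.Prov a → F.Prov (F.box a)
  dist : ∀ a b : F.S,
    F.Prov (F.imp (F.box (F.imp a b)) (F.imp (F.box a) (F.box b)))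
  d3 : ∀ a : F.S, F.Prov (F.imp (F.box a) (F.box (F.box a)))
  ltS_trans : ∀ ξ ζ η : Ordinal,
    F.Prov (F.imp (F.and (F.ltS ξ ζ) (F.ltS ζ η)) (F.ltS ξ η))
  ltS_intro : ∀ {ξ ζ : Ordinal}, ξ < ζ → F.Prov (F.ltS ξ ζ)
  ltS_not : ∀ {ξ ζ : Ordinal}, ¬ ξ < ζ → F.Prov (F.neg (F.ltS ξ ζ))
  exF_intro : ∀ (G : F.S → F.S) (a : F.S), F.Prov (F.imp (G a) (F.exF G))
  exF_elim : ∀ (G : F.S → F.S) (c : F.S),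
    (∀ a, F.Prov (F.imp (G a) c)) → F.Prov (F.imp (F.exF G) c)
  exO_intro : ∀ (G : Ordinal → F.S) (ξ : Ordinal), F.Prov (F.imp (G ξ) (F.exO G))
  exO_elim : ∀ (G : Ordinal → F.S) (c : F.S),
    (∀ ξ, F.Prov (F.imp (G ξ) c)) → F.Prov (F.imp (F.exO G) c)
  exN_intro : ∀ (G : ℕ → F.S) (n : ℕ), F.Prov (F.imp (G n) (F.exN G))
  exN_elim : ∀ (G : ℕ → F.S) (c : F.S),
    (∀ n, F.Prov (F.imp (G n) c)) → F.Prov (F.imp (F.exN G) c)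
  exL_intro : ∀ (G : List (Ordinal × F.S) → F.S) (ρ : List (Ordinal × F.S)),
    F.Prov (F.imp (G ρ) (F.exL G))
  exL_elim : ∀ (G : List (Ordinal × F.S) → F.S) (c : F.S),
    (∀ ρ, F.Prov (F.imp (G ρ) c)) → F.Prov (F.imp (F.exL G) c)

/-- `T` is a single-oracle (one-)Münchhausen theory for `Λ`, with candidate
predicate `M ζ φ` (for `[ζ]_T φ`): `T` proves the defining recursion
`[ζ]φ ↔ □φ ∨ ∃ψ ∃ξ≺ζ (⟨ξ⟩ψ ∧ □(⟨ξ⟩ψ → φ))` for `ζ ≺ Λ`, proves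
`ξ ≺ ζ → [ζ](ξ ≺ ζ)`, and proves that `0` is the `≺`-minimal element. -/
structure OneMunch (F : MFrame) (Λ : Ordinal.{0}) (M : Ordinal.{0} → F.S → F.S) : Prop where
  recEq : ∀ ζ < Λ, ∀ φ : F.S,
    F.Prov (F.iff (M ζ φ)
      (F.or (F.box φ)
        (F.exF fun ψ => F.exO fun ξ =>
          F.and (F.ltS ξ ζ)
            (F.and (F.mdia M ξ ψ) (F.box (F.imp (F.mdia M ξ ψ) φ))))))
  ltS_box : ∀ {ξ ζ : Ordinal}, ξ < ζ →
    F.Prov (F.imp (F.ltS ξ ζ) (M ζ (F.ltS ξ ζ)))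
  min_zero : ∀ ξ : Ordinal, F.Prov (F.neg (F.ltS ξ 0))

/-- The internal conjunction `⟨τ⟩_T σ` asserting of a finite sequence `ρ` of
pairs (ordinal `τ_i`, formula `σ(i)`) that every `⟨τ_i⟩_T σ(i)` holds. -/
def listDia (M : Ordinal.{0} → F.S → F.S) (ρ : List (Ordinal.{0} × F.S)) : F.S :=
  ρ.foldr (fun p acc => F.and (F.mdia M p.1 p.2) acc) F.top

/-- The internal conjunction asserting `τ ≺ α`, i.e. every ordinal entry of
the sequence `ρ` is `≺ α`. -/
def listLt (ρ : List (Ordinal.{0} × F.S)) (α : Ordinal.{0}) : F.S :=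
  ρ.foldr (fun p acc => F.and (F.ltS p.1 α) acc) F.top

/-- `T` is a (multiple-oracle) Münchhausen theory for `Λ` with candidate
predicate `M α φ`: `T` proves the recursion
`[α]φ ↔ □φ ∨ ∃σ ∃τ≺α (⟨τ⟩σ ∧ □(⟨τ⟩σ → φ))`, where the internal existential
ranges over finite sequences `ρ` of pairs (which encodes the pair `σ, τ` of
equal-length sequences of formulas and of ordinals), together with
`ξ ≺ ζ → [ζ](ξ ≺ ζ)`. -/
structure MultiMunch (F : MFrame) (Λ : Ordinal.{0}) (M : Ordinal.{0} → F.S → F.S) : Prop where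
  recEq : ∀ α < Λ, ∀ φ : F.S,
    F.Prov (F.iff (M α φ)
      (F.or (F.box φ)
        (F.exL fun ρ =>
          F.and (F.listLt ρ α)
            (F.and (F.listDia M ρ) (F.box (F.imp (F.listDia M ρ) φ))))))
  ltS_box : ∀ {ξ ζ : Ordinal}, ξ < ζ →
    F.Prov (F.imp (F.ltS ξ ζ) (M ζ (F.ltS ξ ζ)))
  min_zero : ∀ ξ : Ordinal, F.Prov (F.neg (F.ltS ξ 0))

/-- Truth in the standard model: a predicate `Tr` making `T` sound, commuting
with the logical operations, with `Tr (□φ) ↔ T ⊢ φ` and with the internal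
quantifiers and ordering evaluated standardly. -/
structure Truth (F : MFrame) (Tr : F.S → Prop) : Prop where
  sound : ∀ a : F.S, F.Prov a → Tr a
  bot : ¬ Tr F.bot
  imp : ∀ a b : F.S, Tr (F.imp a b) ↔ (Tr a → Tr b)
  box : ∀ a : F.S, Tr (F.box a) ↔ F.Prov a
  ltS : ∀ ξ ζ : Ordinal, Tr (F.ltS ξ ζ) ↔ ξ < ζ
  exF : ∀ G : F.S → F.S, Tr (F.exF G) ↔ ∃ a, Tr (G a)
  exO : ∀ G : Ordinal → F.S, Tr (F.exO G) ↔ ∃ ξ, Tr (G ξ)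
  exN : ∀ G : ℕ → F.S, Tr (F.exN G) ↔ ∃ n, Tr (G n)
  exL : ∀ G : List (Ordinal × F.S) → F.S, Tr (F.exL G) ↔ ∃ ρ, Tr (G ρ)

end MFrame


/-! Agreement of two Münchhausen predicates propagates upwards along `≺`: the recursion for
`[ζ]φ` mentions the predicate only at levels `ξ` below `ζ` (witnesses `ξ` with `ξ ⊀ ζ` are
refuted, since `T` decides `≺` correctly), and agreement at those levels can be carried under
`□_T` by necessitation. Transfinite induction then gives agreement at every level below `Λ`,
in particular at all finite levels, as `ω ≤ Λ`. -/

namespace MFrame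

def recClause (F : MFrame) (M : Ordinal.{0} → F.S → F.S) (ζ : Ordinal.{0}) (φ ψ : F.S)
    (ξ : Ordinal.{0}) : F.S :=
  F.and (F.ltS ξ ζ) (F.and (F.mdia M ξ ψ) (F.box (F.imp (F.mdia M ξ ψ) φ)))

namespace Basic

variable {F : MFrame} (hF : F.Basic)
include hF

theorem imp_intro {a : F.S} (b : F.S) (h : F.Prov a) : F.Prov (F.imp b a) :=
  hF.mp (hF.ax1 a b) h

theorem mpd {a b c : F.S} (h₁ : F.Prov (F.imp a (F.imp b c))) (h₂ : F.Prov (F.imp a b)) :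
    F.Prov (F.imp a c) :=
  hF.mp (hF.mp (hF.ax2 a b c) h₁) h₂

theorem imp_self (a : F.S) : F.Prov (F.imp a a) :=
  hF.mpd (hF.ax1 a (F.imp a a)) (hF.ax1 a a)

theorem imp_mono_right {a b b' : F.S} (h : F.Prov (F.imp b b')) :
    F.Prov (F.imp (F.imp a b) (F.imp a b')) :=
  hF.mp (hF.ax2 a b b') (hF.imp_intro a h)

theorem imp_trans {a b c : F.S} (h₁ : F.Prov (F.imp a b)) (h₂ : F.Prov (F.imp b c)) :
    F.Prov (F.imp a c) :=
  hF.mp (hF.imp_mono_right h₂) h₁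

theorem imp_mono_left {a a' c : F.S} (h : F.Prov (F.imp a' a)) :
    F.Prov (F.imp (F.imp a c) (F.imp a' c)) :=
  hF.mpd (hF.imp_trans (hF.ax1 (F.imp a c) a') (hF.ax2 a' a c)) (hF.imp_intro _ h)

theorem imp_mono {a a' b b' : F.S} (h₁ : F.Prov (F.imp a' a)) (h₂ : F.Prov (F.imp b b')) :
    F.Prov (F.imp (F.imp a b) (F.imp a' b')) :=
  hF.imp_trans (hF.imp_mono_right h₂) (hF.imp_mono_left h₁)

theorem contrapose {a b : F.S} (h : F.Prov (F.imp a b)) :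
    F.Prov (F.imp (F.neg b) (F.neg a)) :=
  hF.imp_mono_left h

theorem bot_imp (b : F.S) : F.Prov (F.imp F.bot b) :=
  hF.mp (hF.ax3 b F.bot) (hF.imp_intro (F.neg b) (hF.imp_self F.bot))

theorem not_not_intro (a : F.S) : F.Prov (F.imp a (F.neg (F.neg a))) :=
  hF.imp_trans (hF.ax1 a (F.neg a)) (hF.mp (hF.ax2 (F.neg a) a F.bot) (hF.imp_self (F.neg a)))

theorem of_not_not (a : F.S) : F.Prov (F.imp (F.neg (F.neg a)) a) :=
  hF.mp (hF.ax3 a (F.neg (F.neg a))) (hF.not_not_intro (F.neg a))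

theorem and_left (a b : F.S) : F.Prov (F.imp (F.and a b) a) :=
  hF.imp_trans (hF.contrapose (hF.imp_mono_right (hF.bot_imp (F.neg b)))) (hF.of_not_not a)

theorem and_right (a b : F.S) : F.Prov (F.imp (F.and a b) b) :=
  hF.imp_trans (hF.contrapose (hF.ax1 (F.neg b) a)) (hF.of_not_not b)

theorem and_intro {a b : F.S} (ha : F.Prov a) (hb : F.Prov b) : F.Prov (F.and a b) :=
  hF.mpd (hF.mpd (hF.imp_self _) (hF.imp_intro _ ha)) (hF.imp_intro _ hb)

theorem and_mono {a a' b b' : F.S} (h₁ : F.Prov (F.imp a a')) (h₂ : F.Prov (F.imp b b')) :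
    F.Prov (F.imp (F.and a b) (F.and a' b')) :=
  hF.contrapose (hF.imp_mono h₁ (hF.contrapose h₂))

theorem or_mono_right {a b b' : F.S} (h : F.Prov (F.imp b b')) :
    F.Prov (F.imp (F.or a b) (F.or a b')) :=
  hF.imp_mono_right h

theorem iff_intro {a b : F.S} (h₁ : F.Prov (F.imp a b)) (h₂ : F.Prov (F.imp b a)) :
    F.Prov (F.iff a b) :=
  hF.and_intro h₁ h₂

theorem iff_mp {a b : F.S} (h : F.Prov (F.iff a b)) : F.Prov (F.imp a b) :=
  hF.mp (hF.and_left _ _) h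

theorem iff_mpr {a b : F.S} (h : F.Prov (F.iff a b)) : F.Prov (F.imp b a) :=
  hF.mp (hF.and_right _ _) h

theorem iff_symm {a b : F.S} (h : F.Prov (F.iff a b)) : F.Prov (F.iff b a) :=
  hF.iff_intro (hF.iff_mpr h) (hF.iff_mp h)

theorem box_mono {a b : F.S} (h : F.Prov (F.imp a b)) : F.Prov (F.imp (F.box a) (F.box b)) :=
  hF.mp (hF.dist a b) (hF.nec h)

theorem exF_mono {G G' : F.S → F.S} (h : ∀ a, F.Prov (F.imp (G a) (G' a))) :
    F.Prov (F.imp (F.exF G) (F.exF G')) :=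
  hF.exF_elim G _ fun a => hF.imp_trans (h a) (hF.exF_intro G' a)

theorem exO_mono {G G' : Ordinal → F.S} (h : ∀ ξ, F.Prov (F.imp (G ξ) (G' ξ))) :
    F.Prov (F.imp (F.exO G) (F.exO G')) :=
  hF.exO_elim G _ fun ξ => hF.imp_trans (h ξ) (hF.exO_intro G' ξ)

theorem mdia_mono {M M' : Ordinal → F.S → F.S} {ξ : Ordinal} {ψ : F.S}
    (h : F.Prov (F.imp (M' ξ (F.neg ψ)) (M ξ (F.neg ψ)))) :
    F.Prov (F.imp (F.mdia M ξ ψ) (F.mdia M' ξ ψ)) :=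
  hF.contrapose h

theorem recClause_mono {M M' : Ordinal → F.S → F.S} {ζ : Ordinal}
    (hMM' : ∀ ξ < ζ, ∀ χ, F.Prov (F.iff (M ξ χ) (M' ξ χ))) (φ ψ : F.S) (ξ : Ordinal) :
    F.Prov (F.imp (F.recClause M ζ φ ψ ξ) (F.recClause M' ζ φ ψ ξ)) := by
  by_cases hξ : ξ < ζ
  · have hdia := hF.mdia_mono (hF.iff_mpr (hMM' ξ hξ (F.neg ψ)))
    have hdia' := hF.mdia_mono (hF.iff_mp (hMM' ξ hξ (F.neg ψ)))
    exact hF.and_mono (hF.imp_self _)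
      (hF.and_mono hdia (hF.box_mono (hF.imp_mono hdia' (hF.imp_self φ))))
  · exact hF.imp_trans (hF.imp_trans (hF.and_left _ _) (hF.ltS_not hξ)) (hF.bot_imp _)

end Basic

namespace OneMunch

variable {F : MFrame} (hF : F.Basic) {Λ : Ordinal} {M M' : Ordinal → F.S → F.S}
include hF

theorem imp_of_agree_below (hM : F.OneMunch Λ M) (hM' : F.OneMunch Λ M') {ζ : Ordinal}
    (hζ : ζ < Λ) (hMM' : ∀ ξ < ζ, ∀ χ, F.Prov (F.iff (M ξ χ) (M' ξ χ))) (φ : F.S) :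
    F.Prov (F.imp (M ζ φ) (M' ζ φ)) := by
  have hrec := hM.recEq ζ hζ φ
  have hrec' := hM'.recEq ζ hζ φ
  have hbody := hF.or_mono_right (a := F.box φ)
    (hF.exF_mono fun ψ => hF.exO_mono fun ξ => hF.recClause_mono hMM' φ ψ ξ)
  exact hF.imp_trans (hF.iff_mp hrec) (hF.imp_trans hbody (hF.iff_mpr hrec'))

theorem iff_of_lt (hM : F.OneMunch Λ M) (hM' : F.OneMunch Λ M') (ζ : Ordinal) (hζ : ζ < Λ)
    (φ : F.S) : F.Prov (F.iff (M ζ φ) (M' ζ φ)) := by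
  induction ζ using WellFoundedLT.induction generalizing φ with
  | _ ζ ih =>
    have hMM' : ∀ ξ < ζ, ∀ χ, F.Prov (F.iff (M ξ χ) (M' ξ χ)) :=
      fun ξ hξ => ih ξ hξ (hξ.trans hζ)
    exact hF.iff_intro (imp_of_agree_below hF hM hM' hζ hMM' φ)
      (imp_of_agree_below hF hM' hM hζ (fun ξ hξ χ => hF.iff_symm (hMM' ξ hξ χ)) φ)

end OneMunch

end MFrame

theorem oneMunch_unique_finite_levels_general (F : MFrame) (hF : F.Basic)
    (Λ : Ordinal) (hΛ : Ordinal.omega0 ≤ Λ)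
    (M M' : Ordinal → F.S → F.S)
    (hM : F.OneMunch Λ M) (hM' : F.OneMunch Λ M') :
    ∀ n : ℕ, ∀ φ : F.S, F.Prov (F.iff (M (n : Ordinal) φ) (M' (n : Ordinal) φ)) :=
  fun n => hM.iff_of_lt hF hM' n ((Ordinal.natCast_lt_omega0 n).trans_le hΛ)

/-- uniqueness of Münchhausen predicates at finite levels: if a
sound `Λ`-one-Münchhausen theory `T` (with `Λ ≥ ω`) has two Münchhausen
provability predicates `[α]_T` and `[α]'_T`, both satisfying the defining
recursion, then for every external natural number `n`,
`T ⊢ ∀φ ([n]_T φ ↔ [n]'_T φ)`. -/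
theorem oneMunch_unique_finite_levels (F : MFrame) (hF : F.Basic)
    (Λ : Ordinal) (hΛ : Ordinal.omega0 ≤ Λ)
    (M M' : Ordinal → F.S → F.S)
    (hM : F.OneMunch Λ M) (hM' : F.OneMunch Λ M')
    (Tr : F.S → Prop) (hTr : F.Truth Tr) :
    ∀ n : ℕ, ∀ φ : F.S, F.Prov (F.iff (M (n : Ordinal) φ) (M' (n : Ordinal) φ)) :=
  oneMunch_unique_finite_levels_general F hF Λ hΛ M M' hM hM'
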